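/- Let G and H be finite groups with H nontrivial, and suppose G = G₁ ⋈ G₂ is an (internal) Zappa–Szép product of nontrivial subgroups G₁, G₂ ≤ G, i.e., G₁ ∩ G₂ = {1} and G₁G₂ = G. Then Λ_{G,H} ≤ max{Λ_{G₁,H}, Λ_{G₂,H}}. -/
import Mathlib


/-- An affine homomorphism from `G` to `H` is a function of the form
`g ↦ h * φ₀ g` for a fixed `h : H` and a group homomorphism `φ₀ : G →* H`. -/
def IsAffineHom {G H : Type*} [Group G] [Group H] (φ : G → H) : Prop :=
  ∃ (h : H) (φ₀ : G →* H), ∀ g : G, φ g = h * φ₀ g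

/-- The agreement of two functions `f g : G → H`: the fraction of inputs
on which they agree, `|Eq(f,g)| / |G|`. -/
noncomputable def agr {G H : Type*} (f g : G → H) : ℝ :=
  (Nat.card {x : G // f x = g x} : ℝ) / (Nat.card G : ℝ)

/-- The maximum agreement `Λ_{G,H}`: the maximum of `agr φ ψ` over all pairs of
distinct affine homomorphisms `φ ψ : G → H`. -/
noncomputable def Lambda (G H : Type*) [Group G] [Group H] : ℝ :=
  sSup {r : ℝ | ∃ φ ψ : G → H,
    IsAffineHom φ ∧ IsAffineHom ψ ∧ φ ≠ ψ ∧ r = agr φ ψ}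

section Aux

variable {G H : Type*} [Group G] [Group H]

lemma isAffineHom_const (h : H) : IsAffineHom (fun _ : G => h) :=
  ⟨h, 1, fun g => by simp⟩

omit [Group G] [Group H] in
lemma agr_le_one [Finite G] (f g : G → H) : agr f g ≤ 1 := by
  unfold agr
  rcases Nat.eq_zero_or_pos (Nat.card G) with h | h
  · simp [h]
  · rw [div_le_one (by exact_mod_cast h)]
    exact_mod_cast Nat.card_le_card_of_injective (Subtype.val : {x : G // f x = g x} → G)
      Subtype.coe_injective

lemma lambda_bddAbove [Finite G] :
    BddAbove {r : ℝ | ∃ φ ψ : G → H,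
      IsAffineHom φ ∧ IsAffineHom ψ ∧ φ ≠ ψ ∧ r = agr φ ψ} := by
  refine ⟨1, ?_⟩
  rintro r ⟨φ, ψ, -, -, -, rfl⟩
  exact agr_le_one φ ψ

lemma agr_le_lambda [Finite G] {φ ψ : G → H} (hφ : IsAffineHom φ) (hψ : IsAffineHom ψ)
    (hne : φ ≠ ψ) : agr φ ψ ≤ Lambda G H :=
  le_csSup lambda_bddAbove ⟨φ, ψ, hφ, hψ, hne, rfl⟩

lemma slice_left {φ : G → H} (hφ : IsAffineHom φ) (K : Subgroup G) (y : G) :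
    IsAffineHom (fun x : K => φ (↑x * y)) := by
  obtain ⟨h, φ₀, hh⟩ := hφ
  refine ⟨h * φ₀ y, (MulAut.conj (φ₀ y)⁻¹).toMonoidHom.comp (φ₀.comp K.subtype), fun x => ?_⟩
  simp [hh, MulAut.conj]
  group

lemma slice_right {φ : G → H} (hφ : IsAffineHom φ) (K : Subgroup G) (x : G) :
    IsAffineHom (fun y : K => φ (x * ↑y)) := by
  obtain ⟨h, φ₀, hh⟩ := hφ
  exact ⟨h * φ₀ x, φ₀.comp K.subtype, fun y => by simp [hh, mul_assoc]⟩

end Aux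

theorem zappa_szep_lambda (G H : Type*) [Group G] [Group H]
    [Finite G] [Finite H] [Nontrivial H]
    (G₁ G₂ : Subgroup G) (h1 : G₁ ≠ ⊥) (h2 : G₂ ≠ ⊥)
    (hint : G₁ ⊓ G₂ = ⊥)
    (hmul : ∀ g : G, ∃ x ∈ G₁, ∃ y ∈ G₂, g = x * y) :
    Lambda G H ≤ max (Lambda G₁ H) (Lambda G₂ H) := by
  classical
  letI : Fintype G := Fintype.ofFinite G
  letI : Fintype G₁ := Fintype.ofFinite G₁
  letI : Fintype G₂ := Fintype.ofFinite G₂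
  -- uniqueness of decomposition
  have huniq : ∀ (x x' : G₁) (y y' : G₂), (↑x : G) * ↑y = ↑x' * ↑y' → x = x' ∧ y = y' := by
    intro x x' y y' hxy
    have hx'' : (↑x : G) = ↑x' * ↑y' * (↑y)⁻¹ := by
      rw [eq_mul_inv_iff_mul_eq, hxy]
    have hmem : ((↑x' : G)⁻¹ * ↑x) ∈ G₁ ⊓ G₂ := by
      constructor
      · exact G₁.mul_mem (G₁.inv_mem x'.2) x.2
      · have : ((↑x' : G)⁻¹ * ↑x) = ↑y' * (↑y)⁻¹ := by rw [hx'']; group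
        rw [this]
        exact G₂.mul_mem y'.2 (G₂.inv_mem y.2)
    rw [hint, Subgroup.mem_bot, inv_mul_eq_one] at hmem
    have hx : x = x' := Subtype.ext hmem.symm
    refine ⟨hx, Subtype.ext ?_⟩
    subst hx
    exact mul_left_cancel hxy
  have hsurj : ∀ g : G, ∃ p : G₁ × G₂, (↑p.1 : G) * ↑p.2 = g := by
    intro g
    obtain ⟨x, hx, y, hy, rfl⟩ := hmul g
    exact ⟨(⟨x, hx⟩, ⟨y, hy⟩), rfl⟩
  obtain ⟨e₁, he₁⟩ : ∃ e : G₂ × G₁ ≃ G, ∀ p, e p = (↑p.2 : G) * ↑p.1 := by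
    have hbij : Function.Bijective (fun p : G₂ × G₁ => (↑p.2 : G) * ↑p.1) := by
      constructor
      · rintro ⟨y, x⟩ ⟨y', x'⟩ h
        obtain ⟨hx, hy⟩ := huniq x x' y y' h
        simp [hx, hy]
      · intro g
        obtain ⟨⟨x, y⟩, hp⟩ := hsurj g
        exact ⟨(y, x), hp⟩
    exact ⟨Equiv.ofBijective _ hbij, fun p => rfl⟩
  obtain ⟨e₂, he₂⟩ : ∃ e : G₁ × G₂ ≃ G, ∀ p, e p = (↑p.1 : G) * ↑p.2 := by
    have hbij : Function.Bijective (fun p : G₁ × G₂ => (↑p.1 : G) * ↑p.2) := by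
      constructor
      · rintro ⟨x, y⟩ ⟨x', y'⟩ h
        obtain ⟨hx, hy⟩ := huniq x x' y y' h
        simp [hx, hy]
      · exact hsurj
    exact ⟨Equiv.ofBijective _ hbij, fun p => rfl⟩
  have hGcard : (Nat.card G : ℝ) = (Nat.card G₁ : ℝ) * (Nat.card G₂ : ℝ) := by
    rw [← Nat.card_congr e₂, Nat.card_prod]
    push_cast; ring
  have hG1pos : (0 : ℝ) < Nat.card G₁ := by exact_mod_cast Nat.card_pos
  have hG2pos : (0 : ℝ) < Nat.card G₂ := by exact_mod_cast Nat.card_pos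
  have hGpos : (0 : ℝ) < Nat.card G := by exact_mod_cast Nat.card_pos
  -- counting lemmas
  have count₁ : ∀ P : G → Prop, Nat.card {g : G // P g}
      = ∑ y : G₂, Nat.card {x : G₁ // P (↑x * ↑y)} := by
    intro P
    have e : {g : G // P g} ≃ Σ y : G₂, {x : G₁ // P (↑x * ↑y)} :=
      (Equiv.subtypeEquiv e₁ (fun p => by rw [he₁])).symm.trans
        (Equiv.subtypeProdEquivSigmaSubtype (fun (y : G₂) (x : G₁) => P (↑x * ↑y)))
    rw [Nat.card_congr e, Nat.card_eq_fintype_card, Fintype.card_sigma]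
    simp [Nat.card_eq_fintype_card]
  have count₂ : ∀ P : G → Prop, Nat.card {g : G // P g}
      = ∑ x : G₁, Nat.card {y : G₂ // P (↑x * ↑y)} := by
    intro P
    have e : {g : G // P g} ≃ Σ x : G₁, {y : G₂ // P (↑x * ↑y)} :=
      (Equiv.subtypeEquiv e₂ (fun p => by rw [he₂])).symm.trans
        (Equiv.subtypeProdEquivSigmaSubtype (fun (x : G₁) (y : G₂) => P (↑x * ↑y)))
    rw [Nat.card_congr e, Nat.card_eq_fintype_card, Fintype.card_sigma]
    simp [Nat.card_eq_fintype_card]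
  -- core bound
  have core : ∀ φ ψ : G → H, IsAffineHom φ → IsAffineHom ψ → φ ≠ ψ →
      agr φ ψ ≤ max (Lambda G₁ H) (Lambda G₂ H) := by
    intro φ ψ hφ hψ hne
    by_cases hA : ∃ y : G₂, (fun x : G₁ => φ (↑x * ↑y)) = (fun x : G₁ => ψ (↑x * ↑y))
    · by_cases hB : ∃ x : G₁, (fun y : G₂ => φ (↑x * ↑y)) = (fun y : G₂ => ψ (↑x * ↑y))
      · -- derive φ = ψ, contradiction
        exfalso
        obtain ⟨y₀, hy₀⟩ := hA
        obtain ⟨x₀, hx₀⟩ := hB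
        obtain ⟨h, φ₀, hhφ⟩ := hφ
        obtain ⟨h', ψ₀, hhψ⟩ := hψ
        have c1 : ∀ x : G₁, h * φ₀ ↑x * φ₀ ↑y₀ = h' * ψ₀ ↑x * ψ₀ ↑y₀ := by
          intro x
          have := congrFun hy₀ x
          simp only [hhφ, hhψ, map_mul] at this
          rw [← mul_assoc, ← mul_assoc] at this
          exact this
        have c2 : ∀ y : G₂, h * φ₀ ↑x₀ * φ₀ ↑y = h' * ψ₀ ↑x₀ * ψ₀ ↑y := by
          intro y
          have := congrFun hx₀ y
          simp only [hhφ, hhψ, map_mul] at this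
          rw [← mul_assoc, ← mul_assoc] at this
          exact this
        -- specialize at identity elements
        have e1 : h * φ₀ ↑y₀ = h' * ψ₀ ↑y₀ := by
          have := c1 1
          simpa using this
        have e2 : h * φ₀ ↑x₀ = h' * ψ₀ ↑x₀ := by
          have := c2 1
          simpa using this
        -- φ₀ = ψ₀ on G₂
        have eq2 : ∀ y : G₂, φ₀ ↑y = ψ₀ ↑y := by
          intro y
          have := c2 y
          rw [← e2] at this
          exact mul_left_cancel this
        -- h * φ₀ x = h' * ψ₀ x on G₁
        have eq1 : ∀ x : G₁, h * φ₀ ↑x = h' * ψ₀ ↑x := by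
          intro x
          have hc := c1 x
          have hyy : φ₀ ↑y₀ = ψ₀ ↑y₀ := eq2 y₀
          rw [hyy] at hc
          exact mul_right_cancel hc
        apply hne
        funext g
        obtain ⟨⟨x, y⟩, rfl⟩ := hsurj g
        rw [hhφ, hhψ, map_mul, map_mul, ← mul_assoc, ← mul_assoc, eq1 x, eq2 y]
      · -- bound via Lambda G₂
        push_neg at hB
        have key : ∀ x : G₁, (Nat.card {y : G₂ // φ (↑x * ↑y) = ψ (↑x * ↑y)} : ℝ)
            ≤ Lambda G₂ H * Nat.card G₂ := by
          intro x
          have hle : agr (fun y : G₂ => φ (↑x * ↑y)) (fun y : G₂ => ψ (↑x * ↑y))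
              ≤ Lambda G₂ H :=
            agr_le_lambda (slice_right hφ G₂ ↑x) (slice_right hψ G₂ ↑x) (hB x)
          unfold agr at hle
          rw [div_le_iff₀ hG2pos] at hle
          exact hle
        have hsum : (Nat.card {g : G // φ g = ψ g} : ℝ)
            ≤ (Nat.card G₁ : ℝ) * (Lambda G₂ H * Nat.card G₂) := by
          rw [count₂ (fun g => φ g = ψ g)]
          push_cast
          calc (∑ x : G₁, (Nat.card {y : G₂ // φ (↑x * ↑y) = ψ (↑x * ↑y)} : ℝ))
              ≤ ∑ _x : G₁, Lambda G₂ H * Nat.card G₂ :=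
                Finset.sum_le_sum (fun x _ => key x)
            _ = (Nat.card G₁ : ℝ) * (Lambda G₂ H * Nat.card G₂) := by
                simp [Finset.sum_const, Finset.card_univ, nsmul_eq_mul, Nat.card_eq_fintype_card]
        refine le_trans ?_ (le_max_right _ _)
        unfold agr
        rw [div_le_iff₀ hGpos, hGcard]
        calc (Nat.card {x : G // φ x = ψ x} : ℝ)
            ≤ (Nat.card G₁ : ℝ) * (Lambda G₂ H * Nat.card G₂) := hsum
          _ = Lambda G₂ H * ((Nat.card G₁ : ℝ) * Nat.card G₂) := by ring
    · -- bound via Lambda G₁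
      push_neg at hA
      have key : ∀ y : G₂, (Nat.card {x : G₁ // φ (↑x * ↑y) = ψ (↑x * ↑y)} : ℝ)
          ≤ Lambda G₁ H * Nat.card G₁ := by
        intro y
        have hle : agr (fun x : G₁ => φ (↑x * ↑y)) (fun x : G₁ => ψ (↑x * ↑y))
            ≤ Lambda G₁ H :=
          agr_le_lambda (slice_left hφ G₁ ↑y) (slice_left hψ G₁ ↑y) (hA y)
        unfold agr at hle
        rw [div_le_iff₀ hG1pos] at hle
        exact hle
      have hsum : (Nat.card {g : G // φ g = ψ g} : ℝ)
          ≤ (Nat.card G₂ : ℝ) * (Lambda G₁ H * Nat.card G₁) := by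
        rw [count₁ (fun g => φ g = ψ g)]
        push_cast
        calc (∑ y : G₂, (Nat.card {x : G₁ // φ (↑x * ↑y) = ψ (↑x * ↑y)} : ℝ))
            ≤ ∑ _y : G₂, Lambda G₁ H * Nat.card G₁ :=
              Finset.sum_le_sum (fun y _ => key y)
          _ = (Nat.card G₂ : ℝ) * (Lambda G₁ H * Nat.card G₁) := by
              simp [Finset.sum_const, Finset.card_univ, nsmul_eq_mul, Nat.card_eq_fintype_card]
      refine le_trans ?_ (le_max_left _ _)
      unfold agr
      rw [div_le_iff₀ hGpos, hGcard]
      calc (Nat.card {x : G // φ x = ψ x} : ℝ)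
          ≤ (Nat.card G₂ : ℝ) * (Lambda G₁ H * Nat.card G₁) := hsum
        _ = Lambda G₁ H * ((Nat.card G₁ : ℝ) * Nat.card G₂) := by ring
  -- conclude via csSup_le
  obtain ⟨h₀, hh₀⟩ := exists_ne (1 : H)
  refine csSup_le ⟨agr (fun _ : G => h₀) (fun _ : G => (1 : H)),
    (fun _ => h₀), (fun _ => 1), isAffineHom_const h₀, isAffineHom_const 1, ?_, rfl⟩ ?_
  · intro hcontra
    exact hh₀ (congrFun hcontra 1)
  · rintro r ⟨φ, ψ, hφ, hψ, hne, rfl⟩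
    exact core φ ψ hφ hψ hne
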